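/- arXiv:1810.07794 — 2 statements merged into one kernel-verified Lean document; each statement's English description precedes it below -/
import Mathlib

section
/- Let H be a graph with at least one nontrivial component, of order k with independence number α(H), let i ∈ {α(H)+1, …, k}, and let n be sufficiently large. Then the sequence π̃_i(H,n) is not potentially H-graphic. Consequently, σ(H,n) ≥ max_{α(H)+1 ≤ i ≤ k} σ(π̃_i(H,n)) + 2. -/
open SimpleGraph

/-- The degree of a vertex, defined without decidability assumptions. -/
noncomputable def gdeg {V : Type*} [Fintype V] (G : SimpleGraph V) (v : V) : ℕ :=
  {w | G.Adj v w}.ncard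

/-- The multiset of vertex degrees of a finite simple graph. -/
noncomputable def degMultiset {V : Type*} [Fintype V] (G : SimpleGraph V) : Multiset ℕ :=
  Finset.univ.val.map (gdeg G)

/-- A finite sequence of naturals is *graphic* if it is the degree sequence of
a finite simple graph (a *realization*). -/
def IsGraphic (π : List ℕ) : Prop :=
  ∃ G : SimpleGraph (Fin π.length), degMultiset G = (π : Multiset ℕ)

/-- `H` is contained in `G` as a (not necessarily induced) subgraph. -/
def ContainsSub {V : Type*} {W : Type*} (H : SimpleGraph V) (G : SimpleGraph W) : Prop :=
  ∃ f : V → W, Function.Injective f ∧ ∀ ⦃a b⦄, H.Adj a b → G.Adj (f a) (f b)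

/-- `π` is *potentially `H`-graphic*: some realization of `π` contains `H` as a subgraph. -/
def PotentiallyGraphic {V : Type*} (H : SimpleGraph V) (π : List ℕ) : Prop :=
  ∃ G : SimpleGraph (Fin π.length), degMultiset G = (π : Multiset ℕ) ∧ ContainsSub H G

/-- The potential number `σ(H,n)`: the minimum even integer such that every
(nonincreasing) graphic sequence of length `n` with sum at least that integer is
potentially `H`-graphic. -/
noncomputable def potentialNumber {V : Type*} (H : SimpleGraph V) (n : ℕ) : ℕ :=
  sInf {s : ℕ | Even s ∧ ∀ π : List ℕ, π.length = n → π.Pairwise (· ≥ ·) →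
      IsGraphic π → s ≤ π.sum → PotentiallyGraphic H π}

/-- The maximum degree `Δ(G)` of a finite graph. -/
noncomputable def maxDeg {V : Type*} [Fintype V] (G : SimpleGraph V) : ℕ :=
  Finset.univ.sup (gdeg G)

/-- The independence number `α(G)`. -/
noncomputable def indepNum {V : Type*} [Fintype V] (G : SimpleGraph V) : ℕ :=
  sSup {k | ∃ s : Finset V, s.card = k ∧ (s : Set V).Pairwise fun a b => ¬ G.Adj a b}

/-- `∇_i(H)`: the minimum of `Δ(F)` over induced subgraphs `F` of `H` of order `i`. -/
noncomputable def nabla {V : Type*} [Fintype V] (H : SimpleGraph V) (i : ℕ) : ℕ :=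
  sInf {d | ∃ s : Finset V, s.card = i ∧ maxDeg (SimpleGraph.induce (s : Set V) H) = d}

/-- The sequence `π̃_i(H,n) = ((n-1)^{k-i}, (k-i+∇_i(H)-1)^{n-k+i})`, with the last
term reduced by one if the sum would otherwise be odd. -/
noncomputable def tildePi {V : Type*} [Fintype V] (H : SimpleGraph V) (i n : ℕ) : List ℕ :=
  let k := Fintype.card V
  let d := k - i + nabla H i - 1
  let base := List.replicate (k - i) (n - 1) ++ List.replicate (n - k + i) d
  if Even base.sum then base else base.dropLast ++ [d - 1]

/-- `σ̃_i(H) = 2(k-i) + ∇_i(H) - 1`. -/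
noncomputable def sigmaTildeI {V : Type*} [Fintype V] (H : SimpleGraph V) (i : ℕ) : ℕ :=
  2 * (Fintype.card V - i) + nabla H i - 1

/-- `σ̃(H) = max_{α(H)+1 ≤ i ≤ k} σ̃_i(H)`. -/
noncomputable def sigmaTilde {V : Type*} [Fintype V] (H : SimpleGraph V) : ℕ :=
  (Finset.Icc (_root_.indepNum H + 1) (Fintype.card V)).sup (sigmaTildeI H)

/-- The family `P(H,n)` of extremal nonrealizing sequences. -/
noncomputable def potSet {V : Type*} [Fintype V] (H : SimpleGraph V) (n : ℕ) : Set (List ℕ) :=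
  {π | ∃ i ∈ Finset.Icc (_root_.indepNum H + 1) (Fintype.card V),
      sigmaTildeI H i = sigmaTilde H ∧ π = tildePi H i n}

/-- `i*(H)`: the least index `i ∈ {α(H)+1, …, k}` with `σ̃_i(H) = σ̃(H)`. -/
noncomputable def iStar {V : Type*} [Fintype V] (H : SimpleGraph V) : ℕ :=
  sInf {i | i ∈ Finset.Icc (_root_.indepNum H + 1) (Fintype.card V) ∧ sigmaTildeI H i = sigmaTilde H}

/-- `‖π₁ - π₂‖ = Σ_j |x_j - y_j|`, padding the shorter sequence with zeros. -/
def seqDist (π₁ π₂ : List ℕ) : ℕ :=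
  ((List.range (max π₁.length π₂.length)).map fun j =>
    Nat.dist (π₁.getD j 0) (π₂.getD j 0)).sum

/-- `H` is stable with respect to the potential number (σ-stable). -/
def SigmaStable {V : Type*} [Fintype V] (H : SimpleGraph V) : Prop :=
  ∀ ε : ℝ, 0 < ε → ∃ δ : ℝ, 0 < δ ∧ ∃ n₀ : ℕ, ∀ n : ℕ, n₀ ≤ n →
    ∀ π : List ℕ, π.length = n → π.Pairwise (· ≥ ·) → IsGraphic π →
      ¬ PotentiallyGraphic H π →
      (potentialNumber H n : ℝ) - δ * n ≤ (π.sum : ℝ) →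
      ∃ π' ∈ potSet H n, (seqDist π π' : ℝ) < ε * n

/-- The nonincreasing degree sequence of a finite graph. -/
noncomputable def degList {V : Type*} [Fintype V] (G : SimpleGraph V) : List ℕ :=
  ((degMultiset G).sort (· ≤ ·)).reverse

/-- `π` is degree-sufficient for `H`: termwise, `π` dominates the nonincreasing
degree sequence of `H`. -/
def DegreeSufficient {V : Type*} [Fintype V] (H : SimpleGraph V) (π : List ℕ) : Prop :=
  Fintype.card V ≤ π.length ∧ ∀ i < Fintype.card V, (degList H).getD i 0 ≤ π.getD i 0

/-- `H` is weakly σ-stable. -/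
def WeaklySigmaStable {V : Type*} [Fintype V] (H : SimpleGraph V) : Prop :=
  ∀ ε : ℝ, 0 < ε → ∃ δ : ℝ, 0 < δ ∧ ∃ n₀ : ℕ, ∀ n : ℕ, n₀ ≤ n →
    ∀ π : List ℕ, π.length = n → π.Pairwise (· ≥ ·) → IsGraphic π →
      DegreeSufficient H π →
      ¬ PotentiallyGraphic H π →
      (potentialNumber H n : ℝ) - δ * n ≤ (π.sum : ℝ) →
      ∃ π' ∈ potSet H n, (seqDist π π' : ℝ) < ε * n

/-- The join `G ∨ H` of two graphs on disjoint vertex sets. -/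
def graphJoin {V : Type*} {W : Type*} (G : SimpleGraph V) (H : SimpleGraph W) :
    SimpleGraph (V ⊕ W) where
  Adj x y :=
    match x, y with
    | .inl a, .inl b => G.Adj a b
    | .inr a, .inr b => H.Adj a b
    | .inl _, .inr _ => True
    | .inr _, .inl _ => True
  symm := ⟨by
    rintro (a | a) (b | b) h
    · exact G.symm.symm _ _ h
    · trivial
    · trivial
    · exact H.symm.symm _ _ h⟩
  loopless := ⟨by
    rintro (a | a) h
    · exact G.loopless.irrefl a h
    · exact H.loopless.irrefl a h⟩

/-- The double star `S_{x,y}`: two adjacent centers (vertices `0` and `1`), with the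
first center adjacent to `x` leaves and the second to `y` leaves, so that the centers
have degrees `x+1` and `y+1`. -/
def doubleStar (x y : ℕ) : SimpleGraph (Fin (x + y + 2)) :=
  SimpleGraph.fromRel fun a b =>
    (a.val = 0 ∧ b.val = 1) ∨
    (a.val = 0 ∧ 2 ≤ b.val ∧ b.val < x + 2) ∨
    (a.val = 1 ∧ x + 2 ≤ b.val)

/-- Laying off the term at (0-based) position `i`: delete it and subtract one from
the `d_i` largest remaining terms. -/
def layOffAt (π : List ℕ) (i : ℕ) : List ℕ :=
  let d := π.getD i 0
  let rest := π.take i ++ π.drop (i + 1)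
  (rest.take d).map (· - 1) ++ rest.drop d

/-!
In a realization of `π̃_i(H,n)` the `k - i` vertices of degree `n - 1` are universal and every
other degree is at most `k - i + ∇_i(H) - 1`. A copy of `H` has at least `i` vertices outside the
universal ones, and among any `i` of them one has `∇_i(H)` neighbours; its image is adjacent to
all universal vertices as well, so its degree is too large.

The sequence is graphic once `n ≥ k`: join `K_{k-i}` to the circulant graph on `ZMod m` with jumps
`±1, …, ±t`, adding the matching `j ↔ j + ⌊m/2⌋` when `∇_i(H) - 1 = 2t + 1` is odd. A graphic,
not potentially `H`-graphic sequence of even sum lies strictly below every admissible even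
threshold, which gives the bound on `σ(H,n)`.
-/

open Finset

section Degrees

variable {V W : Type*} [Fintype V] [Fintype W]

lemma gdeg_eq_degree (G : SimpleGraph V) (v : V) [Fintype (G.neighborSet v)] :
    gdeg G v = G.degree v := by
  rw [gdeg, ← card_neighborSet_eq_degree, ← Nat.card_eq_fintype_card, Nat.card_coe_set_eq]
  rfl

lemma degMultiset_eq_map_degree (G : SimpleGraph V) [DecidableRel G.Adj] :
    degMultiset G = univ.val.map fun v => G.degree v :=
  Multiset.map_congr rfl fun v _ => gdeg_eq_degree G v

lemma card_degMultiset (G : SimpleGraph V) : Multiset.card (degMultiset G) = Fintype.card V := by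
  rw [degMultiset, Multiset.card_map, card_val, card_univ]

lemma count_degMultiset (G : SimpleGraph V) [DecidableRel G.Adj] (b : ℕ) :
    (degMultiset G).count b = #{v | G.degree v = b} := by
  rw [degMultiset_eq_map_degree, Multiset.count_map, card_def, filter_val]
  exact congrArg Multiset.card (Multiset.filter_congr fun v _ => eq_comm)

lemma degMultiset_eq_replicate (G : SimpleGraph V) [DecidableRel G.Adj] {c : ℕ}
    (h : ∀ v, G.degree v = c) : degMultiset G = Multiset.replicate (Fintype.card V) c := by
  rw [degMultiset_eq_map_degree, Multiset.map_congr rfl fun v _ => h v, Multiset.map_const',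
    card_val, card_univ]

lemma degMultiset_eq_cons_replicate (G : SimpleGraph V) [DecidableRel G.Adj] {c c' : ℕ} (z : V)
    (hz : G.degree z = c') (h : ∀ v ≠ z, G.degree v = c) :
    degMultiset G = c' ::ₘ Multiset.replicate (Fintype.card V - 1) c := by
  classical
  have huniv : (univ : Finset V).val = z ::ₘ (univ.erase z).val := by
    rw [erase_val, Multiset.cons_erase (mem_univ_val z)]
  rw [degMultiset_eq_map_degree, huniv, Multiset.map_cons, hz,
    Multiset.map_congr rfl fun v hv => h v (mem_erase.1 hv).1, Multiset.map_const', card_val,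
    card_erase_of_mem (mem_univ z), card_univ]

lemma SimpleGraph.Iso.degMultiset_eq {G : SimpleGraph V} {G' : SimpleGraph W} (e : G ≃g G') :
    degMultiset G' = degMultiset G := by
  classical
  rw [degMultiset_eq_map_degree, degMultiset_eq_map_degree, ← map_univ_equiv e.toEquiv, map_val,
    Multiset.map_map]
  exact Multiset.map_congr rfl fun v _ => e.degree_eq v

lemma isGraphic_of_degMultiset_eq (G : SimpleGraph W) {π : List ℕ} (h : degMultiset G = π) :
    IsGraphic π := by
  have hcard : Fintype.card W = π.length := by rw [← card_degMultiset G, h, Multiset.coe_card]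
  exact ⟨G.map (Fintype.equivFinOfCardEq hcard), by rw [(Iso.map _ G).degMultiset_eq, h]⟩

lemma IsGraphic.even_sum {π : List ℕ} (h : IsGraphic π) : Even π.sum := by
  classical
  obtain ⟨G, hG⟩ := h
  rw [← Multiset.sum_coe, ← hG, degMultiset_eq_map_degree, ← sum_eq_multiset_sum,
    sum_degrees_eq_twice_card_edges]
  exact even_two_mul _

lemma IsGraphic.sum_le {π : List ℕ} (h : IsGraphic π) : π.sum ≤ π.length * (π.length - 1) := by
  classical
  obtain ⟨G, hG⟩ := h
  rw [← Multiset.sum_coe, ← hG, degMultiset_eq_map_degree, ← sum_eq_multiset_sum]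
  calc ∑ v, G.degree v ≤ ∑ _ : Fin π.length, (π.length - 1) :=
        sum_le_sum fun v _ => by
          have := G.degree_lt_card_verts v
          rw [Fintype.card_fin] at this
          omega
    _ = π.length * (π.length - 1) := by simp

end Degrees

lemma gdeg_induce {V : Type*} {H : SimpleGraph V} [DecidableRel H.Adj] (s : Finset V)
    (v : (s : Set V)) :
    gdeg (H.induce s) v = #{w ∈ s | H.Adj v w} := by
  rw [gdeg, ← Set.ncard_image_of_injective _ Subtype.val_injective, ← Set.ncard_coe_finset]
  congr 1
  ext w
  simp only [Set.mem_image, Set.mem_ofPred_eq, comap_adj, Function.Embedding.coe_subtype,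
    coe_filter]
  exact ⟨fun ⟨w', hw', hw⟩ => hw ▸ ⟨w'.2, hw'⟩, fun ⟨hw, hvw⟩ => ⟨⟨w, hw⟩, hvw, rfl⟩⟩

section Nabla

variable {V : Type*} [Fintype V] {H : SimpleGraph V}

lemma maxDeg_le (G : SimpleGraph V) : maxDeg G ≤ Fintype.card V - 1 := by
  classical
  refine Finset.sup_le fun v _ => ?_
  have := G.degree_lt_card_verts v
  rw [gdeg_eq_degree]
  omega

lemma pos_maxDeg_of_adj {G : SimpleGraph V} {v w : V} (h : G.Adj v w) : 0 < maxDeg G := by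
  classical
  refine lt_of_lt_of_le ?_ (le_sup (f := gdeg G) (mem_univ v))
  rw [gdeg_eq_degree]
  exact h.degree_pos_left

lemma card_le_indepNum {s : Finset V} (hs : (s : Set V).Pairwise fun a b => ¬ H.Adj a b) :
    #s ≤ _root_.indepNum H :=
  le_csSup ⟨Fintype.card V, by rintro _ ⟨t, rfl, -⟩; exact card_le_univ t⟩ ⟨s, rfl, hs⟩

lemma indepNum_lt_card {u v : V} (huv : H.Adj u v) : _root_.indepNum H < Fintype.card V := by
  have hpos : 0 < Fintype.card V := Fintype.card_pos_iff.2 ⟨u⟩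
  suffices _root_.indepNum H ≤ Fintype.card V - 1 by omega
  refine csSup_le ⟨0, ∅, rfl, by simp⟩ ?_
  rintro _ ⟨s, rfl, hs⟩
  have hne : s ≠ univ := by
    rintro rfl
    exact hs (mem_univ u) (mem_univ v) huv.ne huv
  have := (card_lt_iff_ne_univ s).2 hne
  omega

lemma nabla_le_maxDeg {i : ℕ} {s : Finset V} (hs : #s = i) : nabla H i ≤ maxDeg (H.induce s) :=
  csInf_le (OrderBot.bddBelow _) ⟨s, hs, rfl⟩

lemma nabla_le_sub_one {i : ℕ} (hik : i ≤ Fintype.card V) : nabla H i ≤ i - 1 := by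
  obtain ⟨s, -, hs⟩ := exists_subset_card_eq (s := (univ : Finset V)) (n := i) (by rwa [card_univ])
  have hcard : Fintype.card (s : Set V) = i := by rw [← hs]; simp
  exact (nabla_le_maxDeg hs).trans (hcard ▸ maxDeg_le (H.induce s))

lemma one_le_nabla {i : ℕ} (hi : _root_.indepNum H < i) (hik : i ≤ Fintype.card V) :
    1 ≤ nabla H i := by
  obtain ⟨s, -, hs⟩ := exists_subset_card_eq (s := (univ : Finset V)) (n := i) (by rwa [card_univ])
  refine le_csInf ⟨_, s, hs, rfl⟩ ?_
  rintro _ ⟨t, ht, rfl⟩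
  by_contra! h0
  have hindep : (t : Set V).Pairwise fun a b => ¬ H.Adj a b := fun a ha b hb _ hab =>
    (pos_maxDeg_of_adj (G := H.induce t) (v := ⟨a, ha⟩) (w := ⟨b, hb⟩) hab).ne' (by omega)
  have := card_le_indepNum hindep
  omega

lemma exists_nabla_le_gdeg_induce {i : ℕ} (hi : 0 < i) {s : Finset V} (hs : #s = i) :
    ∃ v : (s : Set V), nabla H i ≤ gdeg (H.induce s) v := by
  have : Nonempty (s : Set V) := by
    obtain ⟨v, hv⟩ := card_pos.1 (hs ▸ hi)
    exact ⟨⟨v, hv⟩⟩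
  obtain ⟨v, -, hv⟩ := exists_mem_eq_sup univ univ_nonempty (gdeg (H.induce s))
  exact ⟨v, hv ▸ nabla_le_maxDeg hs⟩

end Nabla

def tildeSeq (a m x d : ℕ) : List ℕ :=
  let base := List.replicate a x ++ List.replicate m d
  if Even base.sum then base else base.dropLast ++ [d - 1]

lemma tildePi_eq_tildeSeq {V : Type*} [Fintype V] (H : SimpleGraph V) (i n : ℕ) :
    tildePi H i n = tildeSeq (Fintype.card V - i) (n - Fintype.card V + i) (n - 1)
      (Fintype.card V - i + nabla H i - 1) :=
  rfl

section TildeSeq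

variable {a m x d : ℕ}

lemma replicate_append_replicate_eq (hm : 0 < m) :
    List.replicate a x ++ List.replicate m d =
      List.replicate a x ++ List.replicate (m - 1) d ++ [d] := by
  obtain ⟨m, rfl⟩ := Nat.exists_eq_add_of_lt hm
  simp [List.replicate_succ']

lemma tildeSeq_eq_or (hm : 0 < m) :
    tildeSeq a m x d = List.replicate a x ++ List.replicate m d ∨
      tildeSeq a m x d = List.replicate a x ++ List.replicate (m - 1) d ++ [d - 1] := by
  unfold tildeSeq
  dsimp only
  split_ifs
  · exact Or.inl rfl
  · rw [replicate_append_replicate_eq hm, List.dropLast_concat]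
    exact Or.inr rfl

lemma length_tildeSeq (hm : 0 < m) : (tildeSeq a m x d).length = a + m := by
  rcases tildeSeq_eq_or (a := a) (x := x) (d := d) hm with h | h <;> simp [h]; omega

lemma tildeSeq_pairwise (hm : 0 < m) (hdx : d ≤ x) : (tildeSeq a m x d).Pairwise (· ≥ ·) := by
  rcases tildeSeq_eq_or (a := a) (x := x) (d := d) hm with h | h <;> rw [h] <;>
    simp [List.pairwise_append, List.pairwise_replicate] <;> omega

lemma eq_or_le_of_mem_tildeSeq (hm : 0 < m) {y : ℕ} (hy : y ∈ tildeSeq a m x d) :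
    y = x ∨ y ≤ d := by
  rcases tildeSeq_eq_or (a := a) (x := x) (d := d) hm with h | h <;> rw [h] at hy <;>
    simp [List.mem_replicate] at hy <;> omega

lemma count_tildeSeq (hm : 0 < m) (hdx : d < x) : (tildeSeq a m x d).count x = a := by
  rcases tildeSeq_eq_or (a := a) (x := x) (d := d) hm with h | h <;> rw [h] <;>
    simp [List.count_replicate, List.count_cons] <;> omega

lemma isGraphic_tildeSeq (hm : 0 < m)
    (h : IsGraphic (List.replicate a x ++ List.replicate m d) ∨
      IsGraphic (List.replicate a x ++ List.replicate (m - 1) d ++ [d - 1])) :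
    IsGraphic (tildeSeq a m x d) := by
  -- A realized candidate has even sum, and unless `d = 0` the two sums differ by one.
  have hsplit := replicate_append_replicate_eq (a := a) (x := x) (d := d) hm
  unfold tildeSeq
  dsimp only
  split_ifs with heven
  · refine h.elim id fun h' => ?_
    rcases Nat.eq_zero_or_pos d with rfl | hd
    · rwa [hsplit]
    · have hodd := h'.even_sum
      rw [hsplit] at heven
      simp only [List.sum_append, List.sum_singleton, Nat.even_iff] at heven hodd
      omega
  · rw [hsplit, List.dropLast_concat]
    exact h.resolve_left fun h' => heven h'.even_sum

end TildeSeq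

section Containment

variable {V W : Type*} [Fintype V] [Fintype W] {H : SimpleGraph V}

theorem exists_add_nabla_le_degree {G : SimpleGraph W} [DecidableRel G.Adj]
    (hHG : ContainsSub H G) {U : Finset W} (hU : ∀ w ∈ U, G.IsUniversal w) {i : ℕ} (hi : 0 < i)
    (hcard : #U + i ≤ Fintype.card V) : ∃ w ∉ U, #U + nabla H i ≤ G.degree w := by
  classical
  obtain ⟨f, hf, hfadj⟩ := hHG
  have hout : i ≤ #{u | f u ∉ U} := by
    have hin : #{u | f u ∈ U} ≤ #U :=
      card_le_card_of_injOn f (fun u hu => (mem_filter.1 hu).2) hf.injOn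
    have : #{u | f u ∈ U} + #{u | f u ∉ U} = Fintype.card V := by
      rw [← card_univ]
      exact card_filter_add_card_filter_not _
    omega
  obtain ⟨S, hSout, hS⟩ := exists_subset_card_eq hout
  have hfS : ∀ u ∈ S, f u ∉ U := fun u hu => (mem_filter.1 (hSout hu)).2
  obtain ⟨v, hv⟩ := exists_nabla_le_gdeg_induce (H := H) hi hS
  set N := {w ∈ S | H.Adj v w}
  have hdisj : Disjoint U (N.image f) := disjoint_right.2 fun y hy => by
    obtain ⟨w, hw, rfl⟩ := mem_image.1 hy
    exact hfS w (mem_filter.1 hw).1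
  have hsub : U.disjUnion (N.image f) hdisj ⊆ G.neighborFinset (f v) := by
    intro y hy
    rw [mem_neighborFinset]
    rcases mem_disjUnion.1 hy with hy | hy
    · exact (hU y hy fun h => hfS v v.2 (by rwa [← h])).symm
    · obtain ⟨w, hw, rfl⟩ := mem_image.1 hy
      exact hfadj (mem_filter.1 hw).2
  refine ⟨f v, hfS v v.2, ?_⟩
  calc #U + nabla H i ≤ #U + #(N.image f) := by
        rw [card_image_of_injective _ hf, ← gdeg_induce]
        omega
    _ = #(U.disjUnion (N.image f) hdisj) := (card_disjUnion ..).symm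
    _ ≤ G.degree (f v) := card_le_card hsub

theorem not_potentiallyGraphic_tildeSeq {i a m x d : ℕ} (hi : 0 < i) (hm : 0 < m)
    (hcard : a + i ≤ Fintype.card V) (hx : a + m = x + 1) (hdx : d < x)
    (hd : d < a + nabla H i) : ¬ PotentiallyGraphic H (tildeSeq a m x d) := by
  classical
  rintro ⟨G, hG, hHG⟩
  have hcardG : Fintype.card (Fin (tildeSeq a m x d).length) - 1 = x := by
    rw [Fintype.card_fin, length_tildeSeq hm]
    omega
  set U : Finset (Fin (tildeSeq a m x d).length) := {w | G.degree w = x}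
  have hU : ∀ w ∈ U, G.IsUniversal w := fun w hw => by
    rw [← degree_eq_card_sub_one, hcardG]
    exact (mem_filter.1 hw).2
  have hUa : #U = a := by
    rw [← count_degMultiset, hG, Multiset.coe_count, count_tildeSeq hm hdx]
  obtain ⟨w, hwU, hw⟩ := exists_add_nabla_le_degree hHG hU hi (by rwa [hUa])
  have hmem : G.degree w ∈ tildeSeq a m x d := by
    rw [← Multiset.mem_coe, ← hG, degMultiset_eq_map_degree]
    exact Multiset.mem_map_of_mem _ (mem_univ_val w)
  rcases eq_or_le_of_mem_tildeSeq hm hmem with h | h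
  · exact hwU (mem_filter.2 ⟨mem_univ w, h⟩)
  · omega

end Containment

section Realization

lemma degree_sup_of_disjoint {V : Type*} {G₁ G₂ : SimpleGraph V} (h : Disjoint G₁ G₂) (v : V)
    [Fintype ((G₁ ⊔ G₂).neighborSet v)] [Fintype (G₁.neighborSet v)]
    [Fintype (G₂.neighborSet v)] :
    (G₁ ⊔ G₂).degree v = G₁.degree v + G₂.degree v := by
  rw [← card_neighborFinset_eq_degree, neighborFinset_sup_of_disjoint v h, card_disjUnion]
  rfl

lemma degree_circulantGraph {G : Type*} [AddCommGroup G] [Fintype G] [DecidableEq G]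
    {s : Finset G} (hneg : ∀ g ∈ s, -g ∈ s) (h0 : (0 : G) ∉ s) (x : G)
    [Fintype ((circulantGraph (s : Set G)).neighborSet x)] :
    (circulantGraph (s : Set G)).degree x = #s := by
  rw [← card_neighborFinset_eq_degree, ← card_map (addLeftEmbedding x) (s := s)]
  congr 1
  ext y
  rw [mem_neighborFinset, circulantGraph_adj, mem_map]
  simp only [mem_coe, addLeftEmbedding_apply]
  constructor
  · rintro ⟨-, h | h⟩
    · exact ⟨y - x, by simpa using hneg _ h, by abel⟩
    · exact ⟨y - x, h, by abel⟩
  · rintro ⟨g, hg, rfl⟩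
    exact ⟨fun h => h0 (left_eq_add.1 h ▸ hg), Or.inr (by simpa using hg)⟩

def involutionGraph {V : Type*} (σ : V → V) : SimpleGraph V :=
  fromRel fun x y => y = σ x

lemma degree_involutionGraph {V : Type*} [DecidableEq V] {σ : V → V}
    (hσ : Function.Involutive σ) (x : V) [Fintype ((involutionGraph σ).neighborSet x)] :
    (involutionGraph σ).degree x = if σ x = x then 0 else 1 := by
  have : (involutionGraph σ).neighborFinset x = ({σ x} : Finset V).erase x := by
    ext y
    rw [mem_neighborFinset, involutionGraph, fromRel_adj, mem_erase, mem_singleton]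
    constructor
    · rintro ⟨hne, rfl | rfl⟩
      · exact ⟨hne.symm, rfl⟩
      · exact ⟨hne.symm, (hσ y).symm⟩
    · rintro ⟨hne, rfl⟩
      exact ⟨hne.symm, Or.inl rfl⟩
  rw [← card_neighborFinset_eq_degree, this]
  by_cases h : σ x = x
  · simp [h]
  · rw [if_neg h, erase_eq_of_notMem (by rwa [mem_singleton, eq_comm]), card_singleton]

variable {m : ℕ}

def symmInterval (m t : ℕ) : Finset (ZMod m) :=
  (Icc 1 t).image (fun j : ℕ => (j : ZMod m)) ∪ (Icc 1 t).image fun j : ℕ => -(j : ZMod m)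

lemma mem_symmInterval {t : ℕ} {g : ZMod m} :
    g ∈ symmInterval m t ↔ ∃ j, (1 ≤ j ∧ j ≤ t) ∧ ((j : ZMod m) = g ∨ -(j : ZMod m) = g) := by
  simp only [symmInterval, mem_union, mem_image, mem_Icc, ← exists_or, ← and_or_left]

lemma neg_mem_symmInterval {t : ℕ} {g : ZMod m} (hg : g ∈ symmInterval m t) :
    -g ∈ symmInterval m t := by
  obtain ⟨j, hj, rfl | rfl⟩ := mem_symmInterval.1 hg
  · exact mem_symmInterval.2 ⟨j, hj, Or.inr rfl⟩
  · exact mem_symmInterval.2 ⟨j, hj, Or.inl (neg_neg _).symm⟩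

lemma natCast_ne_neg_natCast {j j' : ℕ} (h0 : 0 < j + j') (hm : j + j' < m) :
    (j : ZMod m) ≠ -(j' : ZMod m) := by
  rw [Ne, eq_neg_iff_add_eq_zero, ← Nat.cast_add, ZMod.natCast_eq_zero_iff]
  exact Nat.not_dvd_of_pos_of_lt h0 hm

lemma natCast_injOn_Iio : Set.InjOn (Nat.cast : ℕ → ZMod m) (Set.Iio m) := fun j hj j' hj' h => by
  rwa [ZMod.natCast_eq_natCast_iff', Nat.mod_eq_of_lt hj, Nat.mod_eq_of_lt hj'] at h

lemma natCast_notMem_symmInterval {t q : ℕ} (htq : t < q) (hqm : q + t < m) :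
    (q : ZMod m) ∉ symmInterval m t := by
  rintro hq
  obtain ⟨j, hj, h | h⟩ := mem_symmInterval.1 hq
  · have := natCast_injOn_Iio (m := m) (Set.mem_Iio.2 (by omega)) (Set.mem_Iio.2 (by omega)) h
    omega
  · exact natCast_ne_neg_natCast (m := m) (j := q) (j' := j) (by omega) (by omega) h.symm

lemma zero_notMem_symmInterval {t : ℕ} (ht : t < m) : (0 : ZMod m) ∉ symmInterval m t := by
  rintro h0
  obtain ⟨j, hj, h | h⟩ := mem_symmInterval.1 h0
  · exact natCast_ne_neg_natCast (m := m) (j := j) (j' := 0) (by omega) (by omega)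
      (by simpa using h)
  · exact natCast_ne_neg_natCast (m := m) (j := 0) (j' := j) (by omega) (by omega)
      (by simpa using h.symm)

lemma card_symmInterval {t : ℕ} (ht : 2 * t < m) : #(symmInterval m t) = 2 * t := by
  have hinj : Set.InjOn (fun j : ℕ => (j : ZMod m)) (Icc 1 t) := fun j hj j' hj' =>
    natCast_injOn_Iio (Set.mem_Iio.2 (by simp at hj; omega)) (Set.mem_Iio.2 (by simp at hj'; omega))
  rw [symmInterval, card_union_of_disjoint, card_image_of_injOn hinj,
    card_image_of_injOn fun j hj j' hj' h => hinj hj hj' (neg_inj.1 h), Nat.card_Icc]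
  · omega
  · refine disjoint_left.2 fun g hg hg' => ?_
    obtain ⟨j, hj, rfl⟩ := mem_image.1 hg
    obtain ⟨j', hj', h⟩ := mem_image.1 hg'
    rw [mem_Icc] at hj hj'
    exact natCast_ne_neg_natCast (m := m) (by omega) (by omega) h.symm

def halfSwap (q j : ℕ) : ℕ :=
  if j < q then j + q else if j < 2 * q then j - q else j

/-- A fixed point exists only for odd `m`: the last vertex. -/
def zmodHalfSwap (m : ℕ) (x : ZMod m) : ZMod m :=
  (halfSwap (m / 2) x.val : ZMod m)

variable [NeZero m]

lemma val_zmodHalfSwap (x : ZMod m) : (zmodHalfSwap m x).val = halfSwap (m / 2) x.val := by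
  have := x.val_lt
  exact ZMod.val_cast_of_lt (by unfold halfSwap; split_ifs <;> omega)

lemma zmodHalfSwap_involutive : Function.Involutive (zmodHalfSwap m) := fun x => by
  apply ZMod.val_injective
  rw [val_zmodHalfSwap, val_zmodHalfSwap]
  unfold halfSwap
  split_ifs <;> omega

lemma zmodHalfSwap_eq_self_iff (x : ZMod m) : zmodHalfSwap m x = x ↔ 2 * (m / 2) ≤ x.val := by
  rw [← (ZMod.val_injective m).eq_iff, val_zmodHalfSwap]
  unfold halfSwap
  split_ifs <;> omega

lemma zmodHalfSwap_sub_self (x : ZMod m) :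
    zmodHalfSwap m x - x = 0 ∨ zmodHalfSwap m x - x = ((m / 2 : ℕ) : ZMod m) ∨
      zmodHalfSwap m x - x = -((m / 2 : ℕ) : ZMod m) := by
  have hx : ((x.val : ℕ) : ZMod m) = x := ZMod.natCast_zmod_val x
  unfold zmodHalfSwap halfSwap
  split_ifs with h₁ h₂
  · right; left
    rw [Nat.cast_add, hx, add_sub_cancel_left]
  · right; right
    rw [Nat.cast_sub (by omega), hx, sub_sub_cancel_left]
  · left
    rw [hx, sub_self]

lemma disjoint_circulantGraph_involutionGraph {t : ℕ} (ht : 2 * t + 1 < m) :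
    Disjoint (circulantGraph (symmInterval m t : Set (ZMod m)))
      (involutionGraph (zmodHalfSwap m)) := by
  have hsub : ∀ x, zmodHalfSwap m x - x ∉ symmInterval m t := fun x h => by
    have hq := natCast_notMem_symmInterval (m := m) (t := t) (q := m / 2) (by omega) (by omega)
    rcases zmodHalfSwap_sub_self x with h' | h' | h' <;> rw [h'] at h
    · exact zero_notMem_symmInterval (by omega) h
    · exact hq h
    · exact hq (by simpa using neg_mem_symmInterval h)
  have hsub' : ∀ x, x - zmodHalfSwap m x ∉ symmInterval m t := fun x h =>
    hsub x (by simpa using neg_mem_symmInterval h)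
  refine SimpleGraph.disjoint_left.2 fun x y hxy hσ => ?_
  obtain ⟨-, h | h⟩ := hσ <;> obtain ⟨-, h' | h'⟩ := hxy <;> subst h
  · exact hsub' x h'
  · exact hsub x h'
  · exact hsub y h'
  · exact hsub' y h'

lemma exists_degMultiset_eq_replicate {r : ℕ} (hr : r < m) :
    ∃ L : SimpleGraph (ZMod m), degMultiset L = Multiset.replicate m r ∨
      Odd r ∧ degMultiset L = (r - 1) ::ₘ Multiset.replicate (m - 1) r := by
  classical
  obtain ⟨t, rfl | rfl⟩ := Nat.even_or_odd' r
  · refine ⟨circulantGraph (symmInterval m t : Set (ZMod m)), Or.inl ?_⟩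
    rw [degMultiset_eq_replicate _ fun x => (degree_circulantGraph
      (fun _ => neg_mem_symmInterval) (zero_notMem_symmInterval (by omega)) x).trans
      (card_symmInterval (by omega)), ZMod.card]
  set L := circulantGraph (symmInterval m t : Set (ZMod m)) ⊔ involutionGraph (zmodHalfSwap m)
  have hdeg : ∀ x, L.degree x = 2 * t + if 2 * (m / 2) ≤ x.val then 0 else 1 := fun x => by
    rw [degree_sup_of_disjoint (disjoint_circulantGraph_involutionGraph hr),
      degree_circulantGraph (fun _ => neg_mem_symmInterval) (zero_notMem_symmInterval (by omega)),
      card_symmInterval (by omega), degree_involutionGraph zmodHalfSwap_involutive]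
    simp only [zmodHalfSwap_eq_self_iff]
  refine ⟨L, ?_⟩
  have hx := fun x : ZMod m => x.val_lt
  rcases Nat.even_or_odd m with hm | hm
  · refine Or.inl ((degMultiset_eq_replicate L fun x => ?_).trans (by rw [ZMod.card]))
    rw [hdeg, if_neg (by rcases hm with ⟨c, hc⟩; have := hx x; omega)]
  · refine Or.inr ⟨odd_two_mul_add_one t, (degMultiset_eq_cons_replicate L
      ((m - 1 : ℕ) : ZMod m) ?_ fun x hx' => ?_).trans (by rw [ZMod.card])⟩
    · rw [hdeg, if_pos (by rw [ZMod.val_cast_of_lt (by omega)]; rcases hm with ⟨c, hc⟩; omega)]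
      rfl
    · rw [hdeg, if_neg]
      intro h
      apply hx'
      apply ZMod.val_injective
      rw [ZMod.val_cast_of_lt (by omega)]
      have := hx x
      rcases hm with ⟨c, hc⟩
      omega

end Realization

lemma degMultiset_graphJoin_top {W : Type*} [Fintype W] (a : ℕ) (L : SimpleGraph W) :
    degMultiset (graphJoin (⊤ : SimpleGraph (Fin a)) L) =
      Multiset.replicate a (a + Fintype.card W - 1) + (degMultiset L).map (a + ·) := by
  classical
  set J := graphJoin (⊤ : SimpleGraph (Fin a)) L
  have hinl : ∀ x, J.degree (Sum.inl x) = a + Fintype.card W - 1 := fun x => by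
    rw [(degree_eq_card_sub_one J _).2, Fintype.card_sum, Fintype.card_fin]
    rintro (y | y) hne
    · exact (top_adj x y).2 fun h => hne (congrArg _ h)
    · trivial
  have hinr : ∀ z, J.degree (Sum.inr z) = a + L.degree z := fun z => by
    have : J.neighborFinset (Sum.inr z) = univ.disjSum (L.neighborFinset z) := by
      ext (y | y) <;> rw [mem_neighborFinset] <;> simp [J, graphJoin]
    rw [← card_neighborFinset_eq_degree, this, card_disjSum, card_univ, Fintype.card_fin,
      card_neighborFinset_eq_degree]
  rw [degMultiset_eq_map_degree, degMultiset_eq_map_degree, ← univ_disjSum_univ, val_disjSum,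
    Multiset.disjSum, Multiset.map_add, Multiset.map_map, Multiset.map_map, Multiset.map_map]
  congr 1
  · exact (Multiset.map_congr rfl fun x _ => hinl x).trans
      (by rw [Multiset.map_const', card_val, card_univ, Fintype.card_fin])
  · exact Multiset.map_congr rfl fun z _ => hinr z

theorem isGraphic_tildeSeq_of_lt (a : ℕ) {m r : ℕ} (hr : r < m) :
    IsGraphic (tildeSeq a m (a + m - 1) (a + r)) := by
  have : NeZero m := ⟨by omega⟩
  obtain ⟨L, hL | ⟨hodd, hL⟩⟩ := exists_degMultiset_eq_replicate hr <;>
    refine isGraphic_tildeSeq (by omega) ?_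
  · refine Or.inl (isGraphic_of_degMultiset_eq (graphJoin (⊤ : SimpleGraph (Fin a)) L) ?_)
    rw [degMultiset_graphJoin_top, hL, ZMod.card, Multiset.map_replicate, ← Multiset.coe_add,
      Multiset.coe_replicate, Multiset.coe_replicate]
  · refine Or.inr (isGraphic_of_degMultiset_eq (graphJoin (⊤ : SimpleGraph (Fin a)) L) ?_)
    rw [degMultiset_graphJoin_top, hL, ZMod.card, Multiset.map_cons, Multiset.map_replicate,
      show a + (r - 1) = a + r - 1 by have := hodd.pos; omega, ← Multiset.coe_add,
      ← Multiset.coe_add, Multiset.coe_replicate, Multiset.coe_replicate, Multiset.coe_singleton,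
      add_comm _ {_}, Multiset.singleton_add, Multiset.add_cons]

lemma add_two_le_potentialNumber {V : Type*} {H : SimpleGraph V} {n : ℕ} {π : List ℕ}
    (hlen : π.length = n) (hsorted : π.Pairwise (· ≥ ·)) (hπ : IsGraphic π)
    (hnot : ¬ PotentiallyGraphic H π) : π.sum + 2 ≤ potentialNumber H n := by
  refine le_csInf ⟨n * (n - 1) + 2, (Nat.even_mul_pred_self n).add even_two,
    fun π' hlen' _ hπ' hle => absurd hπ'.sum_le (by rw [hlen']; omega)⟩ ?_
  rintro s ⟨⟨c, rfl⟩, hs⟩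
  have hlt : π.sum < c + c := lt_of_not_ge fun h => hnot (hs π hlen hsorted hπ h)
  obtain ⟨e, he⟩ := hπ.even_sum
  omega

section TildePi

variable {V : Type*} [Fintype V] {H : SimpleGraph V} {i n : ℕ}

lemma length_tildePi (hi : 0 < i) (hik : i ≤ Fintype.card V) (hn : Fintype.card V ≤ n) :
    (tildePi H i n).length = n := by
  rw [tildePi_eq_tildeSeq, length_tildeSeq (by omega)]
  omega

lemma tildePi_pairwise (hi : _root_.indepNum H < i) (hik : i ≤ Fintype.card V)
    (hn : Fintype.card V ≤ n) : (tildePi H i n).Pairwise (· ≥ ·) := by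
  have := nabla_le_sub_one (H := H) hik
  have := one_le_nabla hi hik
  exact tildeSeq_pairwise (by omega) (by omega)

lemma isGraphic_tildePi (hi : _root_.indepNum H < i) (hik : i ≤ Fintype.card V)
    (hn : Fintype.card V ≤ n) : IsGraphic (tildePi H i n) := by
  have := nabla_le_sub_one (H := H) hik
  have := one_le_nabla hi hik
  rw [tildePi_eq_tildeSeq]
  convert isGraphic_tildeSeq_of_lt (Fintype.card V - i) (m := n - Fintype.card V + i)
    (r := nabla H i - 1) (by omega) using 2 <;> omega

theorem not_potentiallyGraphic_tildePi (hi : _root_.indepNum H < i) (hik : i ≤ Fintype.card V)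
    (hn : Fintype.card V ≤ n) : ¬ PotentiallyGraphic H (tildePi H i n) := by
  have := nabla_le_sub_one (H := H) hik
  have := one_le_nabla hi hik
  rw [tildePi_eq_tildeSeq]
  exact not_potentiallyGraphic_tildeSeq (i := i) (by omega) (by omega) (by omega) (by omega)
    (by omega) (by omega)

end TildePi

/-- **Lower bound for the potential number.** For `H` with at least one nontrivial
component and `n` sufficiently large, no `π̃_i(H,n)` is potentially `H`-graphic, and hence
`σ(H,n) ≥ max_i σ(π̃_i(H,n)) + 2`. -/
theorem tildePiNotPotentially {V : Type} [Fintype V] (H : SimpleGraph V)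
    (hEdge : ∃ u v : V, H.Adj u v) :
    ∃ N : ℕ, ∀ n : ℕ, N ≤ n →
      (∀ i ∈ Finset.Icc (_root_.indepNum H + 1) (Fintype.card V),
          ¬ PotentiallyGraphic H (tildePi H i n)) ∧
      (Finset.Icc (_root_.indepNum H + 1) (Fintype.card V)).sup
          (fun i => (tildePi H i n).sum) + 2 ≤ potentialNumber H n := by
  obtain ⟨u, v, huv⟩ := hEdge
  refine ⟨Fintype.card V, fun n hn => ⟨fun i hi => ?_, ?_⟩⟩
  · rw [mem_Icc] at hi
    exact not_potentiallyGraphic_tildePi (by omega) hi.2 hn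
  · obtain ⟨i, hi, hmax⟩ := exists_mem_eq_sup _ (nonempty_Icc.2 (indepNum_lt_card huv))
      fun i => (tildePi H i n).sum
    rw [mem_Icc] at hi
    rw [hmax]
    exact add_two_le_potentialNumber (length_tildePi (by omega) hi.2 hn)
      (tildePi_pairwise (by omega) hi.2 hn) (isGraphic_tildePi (by omega) hi.2 hn)
      (not_potentiallyGraphic_tildePi (by omega) hi.2 hn)
end

section
/- (Yin) Let r and t be positive integers. A nonincreasing graphic sequence π = (d_1, …, d_n) is potentially (K_r ∨ K̄_t)-graphic if and only if there is a realization of π containing a copy of K_r ∨ K̄_t such that the vertices of the clique of order r have degrees d_1, …, d_r and the vertices of the independent set of order t have degrees d_{r+1}, …, d_{r+t}. -/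
open SimpleGraph

/-!
Relabel a realization so that vertex `i` has degree `d_{i+1}`, and record a copy of
`K_r ∨ K̄_t` by its clique `A` and its vertex set `S ⊇ A`. Give a vertex rank 2 on `A`, 1 on
`S \ A` and 0 elsewhere. If a vertex `u` precedes a vertex `v` of higher rank, then
`d(u) ≥ d(v)`, so exchanging the adjacencies of `u` and `v` towards the private neighbours of `v`
and equally many private neighbours of `u` keeps every degree and makes `u` adjacent to all
neighbours of `v`; the copy survives with `u` and `v` interchanged. Each such step lowers
`Σ_{i ∈ A} i + Σ_{i ∈ S} i`, so the process ends with `A` and `S` initial segments.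
-/

lemma Equiv.exists_comp_eq_of_map_univ_eq {α β γ : Type*} [Fintype α] [Fintype β]
    [DecidableEq γ] {f : α → γ} {g : β → γ}
    (h : Finset.univ.val.map f = Finset.univ.val.map g) :
    ∃ e : α ≃ β, ∀ a, g (e a) = f a := by
  have hcard (c : γ) : Fintype.card {a // f a = c} = Fintype.card {b // g b = c} := by
    have := congrArg (Multiset.count c) h
    simp only [Multiset.count_map] at this
    rw [Fintype.card_subtype, Fintype.card_subtype]
    simpa [Finset.card, Finset.filter_val, eq_comm] using this
  exact ⟨Equiv.ofFiberEquiv fun c => Fintype.equivOfCardEq (hcard c), Equiv.ofFiberEquiv_map _⟩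

namespace Fin

open Finset

variable {n : ℕ}

lemma val_swap_le {u v x : Fin n} (hx : x ≠ u) (huv : u ≤ v) :
    (Equiv.swap u v x : ℕ) ≤ x := by
  by_cases hxv : x = v
  · rw [hxv, Equiv.swap_apply_right]
    exact huv
  · rw [Equiv.swap_apply_of_ne_of_ne hx hxv]

lemma sum_val_map_swap_lt {X : Finset (Fin n)} {u v : Fin n} (huv : u < v) (hu : u ∉ X)
    (hv : v ∈ X) :
    ∑ x ∈ X.map (Equiv.swap u v).toEmbedding, (x : ℕ) < ∑ x ∈ X, (x : ℕ) := by
  rw [sum_map]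
  exact sum_lt_sum (fun x hx => val_swap_le (ne_of_mem_of_not_mem hx hu) huv.le)
    ⟨v, hv, by simpa using huv⟩

lemma sum_val_map_swap_le {X : Finset (Fin n)} {u v : Fin n} (huv : u ≤ v)
    (h : u ∈ X → v ∈ X) :
    ∑ x ∈ X.map (Equiv.swap u v).toEmbedding, (x : ℕ) ≤ ∑ x ∈ X, (x : ℕ) := by
  rw [sum_map]
  by_cases hu : u ∈ X
  · refine (Equiv.Perm.sum_comp _ X _ fun x hx => ?_).le
    rcases Equiv.eq_or_eq_of_swap_apply_ne_self hx with rfl | rfl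
    exacts [hu, h hu]
  · exact sum_le_sum fun x hx => val_swap_le (ne_of_mem_of_not_mem hx hu) huv

lemma mem_of_val_lt_card {X : Finset (Fin n)} {a : Fin n} (hX : ∀ v ∈ X, a < v → a ∈ X)
    (ha : (a : ℕ) < #X) : a ∈ X := by
  by_contra haX
  have hsub : X ⊆ Iio a := fun v hv => mem_Iio.2 <|
    lt_of_le_of_ne (not_lt.1 fun hav => haX (hX v hv hav)) fun hva => haX (hva ▸ hv)
  have := card_le_card hsub
  rw [card_Iio] at this
  omega

end Fin

namespace SimpleGraph

open Finset

variable {V : Type*}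

/-- The vertices of `S` span a copy of `K_{#A} ∨ K̄_{#S - #A}` in `G` with clique part `A`. -/
def IsCompleteSplitOn (G : SimpleGraph V) (A S : Finset V) : Prop :=
  A ⊆ S ∧ ∀ a ∈ A, ∀ b ∈ S, a ≠ b → G.Adj a b

variable [DecidableEq V]

theorem containsSub_graphJoin_iff {G : SimpleGraph V} {r t : ℕ} :
    ContainsSub (graphJoin (⊤ : SimpleGraph (Fin r)) (⊥ : SimpleGraph (Fin t))) G ↔
      ∃ A S : Finset V, #A = r ∧ #S = r + t ∧ G.IsCompleteSplitOn A S := by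
  constructor
  · rintro ⟨f, hf, hadj⟩
    refine ⟨univ.image (f ∘ Sum.inl), univ.image f, ?_, ?_, ?_, ?_⟩
    · rw [card_image_of_injective _ (hf.comp Sum.inl_injective), card_univ, Fintype.card_fin]
    · rw [card_image_of_injective _ hf, card_univ, Fintype.card_sum, Fintype.card_fin,
        Fintype.card_fin]
    · rw [image_comp]
      exact image_subset_image (subset_univ _)
    · simp only [mem_image, mem_univ, true_and, Function.comp_apply]
      rintro _ ⟨i, rfl⟩ _ ⟨j | j, rfl⟩ hij
      · exact hadj (show i ≠ j by rintro rfl; exact hij rfl)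
      · exact hadj trivial
  · rintro ⟨A, S, hA, hS, hAS, hadj⟩
    let eA : A ≃ Fin r := A.equivFinOfCardEq hA
    let eB : (S \ A : Finset V) ≃ Fin t := (S \ A).equivFinOfCardEq (by
      rw [card_sdiff_of_subset hAS]; omega)
    have hne : ∀ i j, (eA.symm i : V) ≠ eB.symm j := fun i j h =>
      (mem_sdiff.1 (eB.symm j).2).2 (h ▸ (eA.symm i).2)
    refine ⟨Sum.elim (fun i => eA.symm i) (fun j => eB.symm j),
      (Subtype.val_injective.comp eA.symm.injective).sumElim
        (Subtype.val_injective.comp eB.symm.injective) hne, ?_⟩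
    rintro (i | i) (j | j) h
    · exact hadj _ (eA.symm i).2 _ (hAS (eA.symm j).2)
        fun hij => h (eA.symm.injective (Subtype.ext hij))
    · exact hadj _ (eA.symm i).2 _ (mem_sdiff.1 (eB.symm j).2).1 (hne i j)
    · exact (hadj _ (eA.symm j).2 _ (mem_sdiff.1 (eB.symm i).2).1 (hne j i)).symm
    · exact h.elim

/-- `G` with the adjacencies of `u` and of `v` towards the vertices of `Z` exchanged
(meant for `u, v ∉ Z`). -/
def swapAdjOn (G : SimpleGraph V) (u v : V) (Z : Set V) [DecidablePred (· ∈ Z)] :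
    SimpleGraph V where
  Adj a b :=
    G.Adj (if b ∈ Z then Equiv.swap u v a else a) (if a ∈ Z then Equiv.swap u v b else b)
  symm := ⟨fun _ _ h => h.symm⟩
  loopless := ⟨fun _ h => G.irrefl h⟩

variable {G : SimpleGraph V} {u v : V} {Z : Set V} [DecidablePred (· ∈ Z)]

lemma swapAdjOn_comm : G.swapAdjOn u v Z = G.swapAdjOn v u Z := by
  simp only [swapAdjOn, Equiv.swap_comm]

lemma swapAdjOn_adj_left (hu : u ∉ Z) (b : V) :
    (G.swapAdjOn u v Z).Adj u b ↔ G.Adj (if b ∈ Z then v else u) b := by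
  by_cases hb : b ∈ Z <;> simp [swapAdjOn, hu, hb]

lemma swapAdjOn_adj_of_ne {a b : V} (hau : a ≠ u) (hav : a ≠ v) (hbu : b ≠ u)
    (hbv : b ≠ v) :
    (G.swapAdjOn u v Z).Adj a b ↔ G.Adj a b := by
  simp [swapAdjOn, Equiv.swap_apply_of_ne_of_ne, *]

lemma swapAdjOn_neighborSet_of_mem (hu : u ∉ Z) (hv : v ∉ Z) {a : V} (ha : a ∈ Z) :
    (G.swapAdjOn u v Z).neighborSet a = Equiv.swap u v ⁻¹' G.neighborSet a := by
  have hau : a ≠ u := by rintro rfl; exact hu ha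
  have hav : a ≠ v := by rintro rfl; exact hv ha
  ext b
  by_cases hb : b ∈ Z <;> simp [swapAdjOn, ha, hb, Equiv.swap_apply_of_ne_of_ne hau hav]

variable [Fintype V]

lemma gdeg_swapAdjOn_left (hu : u ∉ Z)
    (hZ : (G.neighborSet u ∩ Z).ncard = (G.neighborSet v ∩ Z).ncard) :
    gdeg (G.swapAdjOn u v Z) u = gdeg G u := by
  have hin : (G.swapAdjOn u v Z).neighborSet u ∩ Z = G.neighborSet v ∩ Z := by
    ext b; by_cases hb : b ∈ Z <;> simp [swapAdjOn_adj_left hu, hb]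
  have hout : (G.swapAdjOn u v Z).neighborSet u \ Z = G.neighborSet u \ Z := by
    ext b; by_cases hb : b ∈ Z <;> simp [swapAdjOn_adj_left hu, hb]
  rw [gdeg, gdeg, ← Set.ncard_inter_add_ncard_sdiff_eq_ncard _ Z,
    ← Set.ncard_inter_add_ncard_sdiff_eq_ncard {w | G.Adj u w} Z]
  exact congrArg₂ (· + ·) ((congrArg Set.ncard hin).trans hZ.symm) (congrArg Set.ncard hout)

lemma gdeg_swapAdjOn (hu : u ∉ Z) (hv : v ∉ Z)
    (hZ : (G.neighborSet u ∩ Z).ncard = (G.neighborSet v ∩ Z).ncard) (a : V) :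
    gdeg (G.swapAdjOn u v Z) a = gdeg G a := by
  by_cases ha : a ∈ Z
  · rw [gdeg, gdeg, ← neighborSet, ← neighborSet, swapAdjOn_neighborSet_of_mem hu hv ha,
      Set.ncard_preimage_of_injective_subset_range (Equiv.injective _) (by simp)]
  by_cases hau : a = u
  · subst hau
    exact gdeg_swapAdjOn_left hu hZ
  by_cases hav : a = v
  · rw [hav, swapAdjOn_comm]
    exact gdeg_swapAdjOn_left hv hZ.symm
  · have hN : (G.swapAdjOn u v Z).neighborSet a = G.neighborSet a := by
      ext b; simp [swapAdjOn, ha, Equiv.swap_apply_of_ne_of_ne hau hav]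
    exact congrArg Set.ncard hN

theorem exists_gdeg_eq_neighborSet_subset (hdeg : gdeg G v ≤ gdeg G u) :
    ∃ G' : SimpleGraph V, (∀ a, gdeg G' a = gdeg G a) ∧
      (∀ w, w ≠ u → G.Adj v w → G'.Adj u w) ∧
      (∀ w, G.Adj u w → G.Adj v w → G'.Adj v w) ∧
      (G'.Adj u v ↔ G.Adj u v) ∧
      ∀ a b, a ≠ u → a ≠ v → b ≠ u → b ≠ v → (G'.Adj a b ↔ G.Adj a b) := by
  classical
  -- `X` are the private neighbours of `v`; `deg v ≤ deg u` provides as many private neighbours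
  -- `Y'` of `u`, so exchanging the adjacencies of `u` and `v` towards `X ∪ Y'` keeps all degrees.
  set X : Set V := (G.neighborSet v \ G.neighborSet u) \ {u}
  set Y : Set V := (G.neighborSet u \ G.neighborSet v) \ {v}
  have hXY : X.ncard ≤ Y.ncard := by
    have h := (Set.ncard_le_ncard_iff_ncard_sdiff_le_ncard_sdiff (G.neighborSet v).toFinite
      (G.neighborSet u).toFinite).1 hdeg
    by_cases hadj : G.Adj u v
    · rw [Set.ncard_sdiff_singleton_of_mem (by simp [hadj.symm]),
        Set.ncard_sdiff_singleton_of_mem (by simp [hadj])]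
      omega
    · have hX : X = G.neighborSet v \ G.neighborSet u :=
        Set.sdiff_singleton_eq_self fun h => hadj h.1.symm
      have hY : Y = G.neighborSet u \ G.neighborSet v :=
        Set.sdiff_singleton_eq_self fun h => hadj h.1
      rwa [hX, hY]
  obtain ⟨Y', hY'Y, hY'⟩ := Set.exists_subset_card_eq hXY
  set Z := X ∪ Y'
  have hu : u ∉ Z := fun h => h.elim (fun h => h.2 rfl) fun h => G.irrefl (hY'Y h).1.1
  have hv : v ∉ Z := fun h => h.elim (fun h => G.irrefl h.1.1) fun h => (hY'Y h).2 rfl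
  have hZu : G.neighborSet u ∩ Z = Y' := by
    ext b
    refine ⟨?_, fun hb => ⟨(hY'Y hb).1.1, Or.inr hb⟩⟩
    rintro ⟨hb, hbX | hbY'⟩
    · exact absurd hb hbX.1.2
    · exact hbY'
  have hZv : G.neighborSet v ∩ Z = X := by
    ext b
    refine ⟨?_, fun hb => ⟨hb.1.1, Or.inl hb⟩⟩
    rintro ⟨hb, hbX | hbY'⟩
    · exact hbX
    · exact absurd hb (hY'Y hbY').1.2
  have hadj_v : ∀ b, (G.swapAdjOn u v Z).Adj v b ↔ G.Adj (if b ∈ Z then u else v) b := by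
    rw [swapAdjOn_comm]; exact swapAdjOn_adj_left hv
  refine ⟨G.swapAdjOn u v Z, gdeg_swapAdjOn hu hv (by rw [hZu, hZv, hY']), ?_, ?_, ?_,
    fun a b => swapAdjOn_adj_of_ne⟩
  · intro w hwu hvw
    rw [swapAdjOn_adj_left hu]
    split_ifs with hw
    · exact hvw
    · by_contra h
      exact hw (Or.inl ⟨⟨hvw, h⟩, hwu⟩)
  · intro w huw hvw
    rw [hadj_v]
    split_ifs <;> assumption
  · rw [swapAdjOn_adj_left hu, if_neg hv]

theorem IsCompleteSplitOn.exists_swap {A S : Finset V} (h : G.IsCompleteSplitOn A S)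
    (hdeg : gdeg G v ≤ gdeg G u) (hu : u ∉ A) (hv : v ∈ S) :
    ∃ G' : SimpleGraph V, (∀ a, gdeg G' a = gdeg G a) ∧
      G'.IsCompleteSplitOn (A.map (Equiv.swap u v).toEmbedding)
        (S.map (Equiv.swap u v).toEmbedding) := by
  obtain ⟨G', hdeg', hu', hv', huv', hrest⟩ := exists_gdeg_eq_neighborSet_subset hdeg
  refine ⟨G', hdeg', Finset.map_subset_map.2 h.1, ?_⟩
  simp only [Finset.forall_mem_map, Equiv.toEmbedding_apply]
  intro a ha b hb hab
  have hab' : a ≠ b := fun h => hab (h ▸ rfl)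
  have hau : a ≠ u := fun h => hu (h ▸ ha)
  by_cases hav : a = v
  · subst hav
    rw [Equiv.swap_apply_right]
    by_cases hbu : b = u
    · subst hbu
      rw [Equiv.swap_apply_left]
      exact huv'.2 (h.2 _ ha _ hb hab').symm
    · rw [Equiv.swap_apply_of_ne_of_ne hbu (Ne.symm hab')]
      exact hu' b hbu (h.2 _ ha _ hb hab')
  rw [Equiv.swap_apply_of_ne_of_ne hau hav]
  by_cases hbu : b = u
  · subst hbu
    rw [Equiv.swap_apply_left]
    exact (hv' a (h.2 a ha _ hb hau).symm (h.2 a ha v hv hav).symm).symm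
  by_cases hbv : b = v
  · subst hbv
    rw [Equiv.swap_apply_right]
    exact (hu' a hau (h.2 a ha _ hv hav).symm).symm
  rw [Equiv.swap_apply_of_ne_of_ne hbu hbv]
  exact (hrest a b hau hav hbu hbv).2 (h.2 a ha b hb hab')

theorem IsCompleteSplitOn.exists_initialSegment {n : ℕ} {G : SimpleGraph (Fin n)}
    (hG : Antitone (gdeg G)) {A S : Finset (Fin n)} (h : G.IsCompleteSplitOn A S) :
    ∃ G' : SimpleGraph (Fin n), (∀ a, gdeg G' a = gdeg G a) ∧
      ∀ a b : Fin n, a ≠ b → (a : ℕ) < #A → (b : ℕ) < #S → G'.Adj a b := by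
  induction hΦ : ∑ x ∈ A, (x : ℕ) + ∑ x ∈ S, (x : ℕ) using Nat.strong_induction_on
    generalizing G A S with
  | _ N ih =>
  -- Swapping an out-of-order pair moves a vertex of `A` or of `S` to a smaller index.
  by_cases hinv : ∃ u v, u < v ∧ u ∉ A ∧ v ∈ S ∧ (v ∈ A ∨ u ∉ S)
  · obtain ⟨u, v, huv, hu, hv, hvu⟩ := hinv
    obtain ⟨G₁, hG₁, h₁⟩ := h.exists_swap (hG huv.le) hu hv
    have hlt : ∑ x ∈ A.map (Equiv.swap u v).toEmbedding, (x : ℕ) +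
        ∑ x ∈ S.map (Equiv.swap u v).toEmbedding, (x : ℕ) < N := by
      rw [← hΦ]
      rcases hvu with hvA | huS
      · exact add_lt_add_of_lt_of_le (Fin.sum_val_map_swap_lt huv hu hvA)
          (Fin.sum_val_map_swap_le huv.le fun _ => hv)
      · exact add_lt_add_of_le_of_lt (Fin.sum_val_map_swap_le huv.le fun huA => absurd huA hu)
          (Fin.sum_val_map_swap_lt huv huS hv)
    obtain ⟨G', hG', hadj⟩ := ih _ hlt (funext hG₁ ▸ hG) h₁ rfl
    refine ⟨G', fun a => (hG' a).trans (hG₁ a), ?_⟩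
    simpa only [card_map] using hadj
  · push Not at hinv
    refine ⟨G, fun _ => rfl, fun a b hab ha hb => h.2 a ?_ b ?_ hab⟩
    · refine Fin.mem_of_val_lt_card (fun v hv hav => ?_) ha
      by_contra haA
      exact (hinv a v hav haA (h.1 hv)).1 hv
    · refine Fin.mem_of_val_lt_card (fun v hv hbv => ?_) hb
      by_contra hbS
      exact hbS (hinv b v hbv (fun hbA => hbS (h.1 hbA)) hv).2

end SimpleGraph

lemma gdeg_comap_equiv {V W : Type*} [Fintype V] [Fintype W] (G : SimpleGraph W) (e : V ≃ W)
    (v : V) : gdeg (G.comap e) v = gdeg G (e v) :=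
  Set.ncard_preimage_of_injective_subset_range e.injective
    (e.surjective.range_eq ▸ Set.subset_univ _)

lemma ContainsSub.comap_equiv {U V W : Type*} {H : SimpleGraph U} {G : SimpleGraph W}
    (h : ContainsSub H G) (e : V ≃ W) : ContainsSub H (G.comap e) := by
  obtain ⟨f, hf, hadj⟩ := h
  exact ⟨e.symm ∘ f, e.symm.injective.comp hf, fun a b hab => by simpa using hadj hab⟩

lemma degMultiset_eq_of_gdeg_eq_get {π : List ℕ} {G : SimpleGraph (Fin π.length)}
    (h : ∀ i, gdeg G i = π.get i) : degMultiset G = π := by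
  rw [degMultiset, funext h, Fin.univ_val_map, List.ofFn_get]

lemma exists_equiv_gdeg_comap_eq_get {π : List ℕ} {G : SimpleGraph (Fin π.length)}
    (h : degMultiset G = π) :
    ∃ e : Fin π.length ≃ Fin π.length, ∀ i, gdeg (G.comap e) i = π.get i := by
  have hmap : Finset.univ.val.map π.get = Finset.univ.val.map (gdeg G) := by
    rw [Fin.univ_val_map, List.ofFn_get]; exact h.symm
  obtain ⟨e, he⟩ := Equiv.exists_comp_eq_of_map_univ_eq hmap
  exact ⟨e, fun i => (gdeg_comap_equiv G e i).trans (he i)⟩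

theorem yinCompleteSplit_general (r t : ℕ)
    (π : List ℕ) (hsorted : π.Pairwise (· ≥ ·))
    (hrt : r + t ≤ π.length) :
    PotentiallyGraphic (graphJoin (⊤ : SimpleGraph (Fin r)) (⊥ : SimpleGraph (Fin t))) π ↔
      ∃ G : SimpleGraph (Fin π.length),
        (∀ i : Fin π.length, gdeg G i = π.get i) ∧
        ∀ a b : Fin π.length, a ≠ b → a.val < r → b.val < r + t → G.Adj a b := by
  constructor
  · rintro ⟨G, hdeg, hcopy⟩
    obtain ⟨e, he⟩ := exists_equiv_gdeg_comap_eq_get hdeg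
    obtain ⟨A, S, rfl, hS, hAS⟩ := SimpleGraph.containsSub_graphJoin_iff.1 (hcopy.comap_equiv e)
    have hanti : Antitone (gdeg (G.comap e)) := funext he ▸ hsorted.sortedGE.antitone_get
    obtain ⟨G', hG', hadj⟩ := hAS.exists_initialSegment hanti
    exact ⟨G', fun i => (hG' i).trans (he i), hS ▸ hadj⟩
  · rintro ⟨G, hdeg, hadj⟩
    refine ⟨G, degMultiset_eq_of_gdeg_eq_get hdeg, SimpleGraph.containsSub_graphJoin_iff.2
      ⟨Finset.univ.filter fun a => (a : ℕ) < r, Finset.univ.filter fun b => (b : ℕ) < r + t,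
        ?_, ?_, ?_, ?_⟩⟩
    · rw [Fin.card_filter_val_lt]; omega
    · rw [Fin.card_filter_val_lt]; omega
    · intro a; simp only [Finset.mem_filter, Finset.mem_univ, true_and]; omega
    · simp only [Finset.mem_filter, Finset.mem_univ, true_and]
      exact fun a ha b hb hab => hadj a b hab ha hb

/-- **Yin.** A nonincreasing graphic sequence `π` (with at least `r+t` terms) is potentially
`(K_r ∨ K̄_t)`-graphic iff there is a realization of `π` (vertex `i` having degree
`d_{i+1}`) containing a copy of `K_r ∨ K̄_t` in which the clique of order `r` occupies the
vertices of degrees `d_1, …, d_r` and the independent set of order `t` occupies the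
vertices of degrees `d_{r+1}, …, d_{r+t}`. -/
theorem yinCompleteSplit (r t : ℕ) (hr : 0 < r) (ht : 0 < t)
    (π : List ℕ) (hsorted : π.Pairwise (· ≥ ·)) (hgraphic : IsGraphic π)
    (hrt : r + t ≤ π.length) :
    PotentiallyGraphic (graphJoin (⊤ : SimpleGraph (Fin r)) (⊥ : SimpleGraph (Fin t))) π ↔
      ∃ G : SimpleGraph (Fin π.length),
        (∀ i : Fin π.length, gdeg G i = π.get i) ∧
        ∀ a b : Fin π.length, a ≠ b → a.val < r → b.val < r + t → G.Adj a b :=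
  yinCompleteSplit_general r t π hsorted hrt
end
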